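/- Let α be an inversion sequence of length n ≥ 1 and write α = βa, where β is the prefix of α of length n−1 and a = a_n (so 1 ≤ a ≤ n). Then hat_max(α) = hat_max(β)⁺ a, where hat_max(β)⁺ is obtained from hat_max(β) by adding one to every entry that is ≥ a. -/

import Mathlib

/-- Entry of the word `w` at (1-based) position `i`. -/
def ent (w : List ℕ) (i : ℕ) : ℕ := w.getD (i - 1) 0

/-- `w` is an endofunction of `{1,…,n}`, where `n = w.length`. -/
def IsEndo (w : List ℕ) : Prop := ∀ x ∈ w, 1 ≤ x ∧ x ≤ w.length

/-- `w` is an inversion sequence. -/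
def IsInvSeq (w : List ℕ) : Prop :=
  ∀ i ∈ Finset.Icc 1 w.length, 1 ≤ ent w i ∧ ent w i ≤ i

/-- The set of `d`-ascents of `w` (1-based positions): position `1` is always a
`d`-ascent, and `i ≥ 2` is a `d`-ascent if `a_i > a_{i-1} - d`. -/
def ascSet (d : ℕ) (w : List ℕ) : Finset ℕ :=
  (Finset.Icc 1 w.length).filter fun i => i = 1 ∨ ent w (i - 1) < ent w i + d

/-- The number of `d`-ascents of `w`. -/
def ascCard (d : ℕ) (w : List ℕ) : ℕ := (ascSet d w).card

/-- `w` is a `d`-ascent sequence. -/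
def IsDAscSeq (d : ℕ) (w : List ℕ) : Prop :=
  IsEndo w ∧ ∀ i ∈ Finset.Icc 1 w.length, ent w i ≤ 1 + ascCard d (w.take (i - 1))

/-- One step of the map `M`: add one to every entry strictly to the left of
position `j` that is weakly larger than the entry in position `j`. -/
def Mstep (w : List ℕ) (j : ℕ) : List ℕ :=
  w.mapIdx fun k x => if k + 1 < j ∧ ent w j ≤ x then x + 1 else x

/-- The `d`-hat map: apply `Mstep` successively at the `d`-ascents of `w`,
listed in increasing order. -/
def hatd (d : ℕ) (w : List ℕ) : List ℕ :=
  ((ascSet d w).sort (· ≤ ·)).foldl Mstep w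

/-- Largest entry of `w`. -/
def maxEnt (w : List ℕ) : ℕ := w.foldr max 0

/-- `w` is a Cayley permutation: its image is `{1,…,max w}`. -/
def IsCayley (w : List ℕ) : Prop := ∀ x, x ∈ w ↔ (1 ≤ x ∧ x ≤ maxEnt w)

open Classical in
/-- The set of positions of leftmost copies of the values of `w`. -/
noncomputable def nubSet (w : List ℕ) : Finset ℕ :=
  (Finset.Icc 1 w.length).filter fun i =>
    ∀ j ∈ Finset.Icc 1 w.length, ent w j = ent w i → i ≤ j

/-- The least `d` such that `w` is a `d`-ascent sequence. -/
noncomputable def mind (w : List ℕ) : ℕ := sInf {d | IsDAscSeq d w}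

/-- The set `H(w)` of all the (meaningful) `d`-hats of `w`. -/
def Hset (w : List ℕ) : Set (List ℕ) := {x | ∃ d, mind w ≤ d ∧ x = hatd d w}

/-- The max-hat map. -/
def hatmax (w : List ℕ) : List ℕ := hatd (w.length - 1) w

/-- Weak descent set of `w`. -/
def wDesSet (w : List ℕ) : Finset ℕ :=
  (Finset.Icc 2 w.length).filter fun i => ent w i ≤ ent w (i - 1)

/-- The number of weak descents of `w`. -/
def wdes (w : List ℕ) : ℕ := (wDesSet w).card

/-- `i` is a right-left minimum index of `w`. -/
def IsRLMinIdx (w : List ℕ) (i : ℕ) : Prop :=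
  1 ≤ i ∧ i ≤ w.length ∧ ∀ j, i < j → j ≤ w.length → ent w i < ent w j

/-- The set of right-left minima pairs of `w`. -/
def rlMinP (w : List ℕ) : Set (ℕ × ℕ) :=
  {p | IsRLMinIdx w p.1 ∧ p.2 = ent w p.1}

/-- `w` is the word of a permutation of `{1,…,n}`, where `n = w.length`. -/
def IsPermWord (w : List ℕ) : Prop :=
  w.Nodup ∧ ∀ x ∈ w, 1 ≤ x ∧ x ≤ w.length

/-- Add one to every entry of `w` that is `≥ a`. -/
def plus (w : List ℕ) (a : ℕ) : List ℕ :=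
  w.map fun x => if a ≤ x then x + 1 else x

/-- Add one to every entry of `w` that is `≥ a`, then append `a` at the end. -/
def plusApp (w : List ℕ) (a : ℕ) : List ℕ := plus w a ++ [a]

/-- The index of the maximal increasing run of `w` containing position `i`:
one plus the number of descents up to position `i`. -/
def irIdx (w : List ℕ) (i : ℕ) : ℕ :=
  1 + ((Finset.Icc 2 i).filter fun j => ent w j < ent w (j - 1)).card

/-- `w` is ir-subdiagonal: every entry `c` in the `i`th maximal increasing run
satisfies `c ≤ n + 1 - i`. -/
def IsIrSub (w : List ℕ) : Prop :=
  ∀ i ∈ Finset.Icc 1 w.length, ent w i + irIdx w i ≤ w.length + 1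

/-- The index of the maximal decreasing run of `w` containing position `i`. -/
def drIdx (w : List ℕ) (i : ℕ) : ℕ :=
  1 + ((Finset.Icc 2 i).filter fun j => ent w (j - 1) < ent w j).card

/-- `w` is dr-subdiagonal: every entry `c` in the `i`th maximal decreasing run
satisfies `c ≤ n + 1 - i`. -/
def IsDrSub (w : List ℕ) : Prop :=
  ∀ i ∈ Finset.Icc 1 w.length, ent w i + drIdx w i ≤ w.length + 1

/-- `w` is a weak descent sequence. -/
def IsWDesSeq (w : List ℕ) : Prop :=
  IsInvSeq w ∧ ∀ i ∈ Finset.Icc 1 w.length, ent w i ≤ 1 + wdes (w.take (i - 1))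

/-- `w` is a primitive ascent sequence: an ascent sequence with no flat steps. -/
def IsPrimAscSeq (w : List ℕ) : Prop :=
  IsDAscSeq 0 w ∧ ∀ i ∈ Finset.Icc 1 (w.length - 1), ent w i ≠ ent w (i + 1)

/-- Insert position `i` into a list of positions sorted by the Burge order:
ascending entries, ties broken by descending position. -/
def bInsert (w : List ℕ) (i : ℕ) : List ℕ → List ℕ
  | [] => [i]
  | j :: t =>
      if ent w i < ent w j ∨ (ent w i = ent w j ∧ j ≤ i) then i :: j :: t
      else j :: bInsert w i t

/-- The permutation `burget w` obtained from the Burge transpose of the biword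
with top row `1,…,n` and bottom row `w`: sort the positions `1,…,n` in
ascending order of their entries, breaking ties in descending order of
position. -/
def burget (w : List ℕ) : List ℕ :=
  ((List.range w.length).map (· + 1)).foldr (bInsert w) []

lemma my_sort_Icc (n : ℕ) : (Finset.Icc 1 n).sort (· ≤ ·) = List.range' 1 n := by
  refine List.Perm.eq_of_pairwise' (r := (· ≤ ·)) (Finset.pairwise_sort _ _)
    List.pairwise_le_range' ?_
  refine (List.perm_ext_iff_of_nodup (Finset.sort_nodup _ _) List.nodup_range').2 ?_
  intro x
  simp only [Finset.mem_sort, List.mem_range'_1, Finset.mem_Icc]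
  omega

lemma my_ascSet_eq (w : List ℕ) (hw : IsInvSeq w) (d : ℕ) (hd : w.length ≤ d + 1) :
    ascSet d w = Finset.Icc 1 w.length := by
  unfold ascSet
  apply Finset.filter_true_of_mem
  intro i hi
  simp only [Finset.mem_Icc] at hi
  rcases Nat.eq_or_lt_of_le hi.1 with h | h
  · exact Or.inl h.symm
  · right
    have h1 := hw (i - 1) (by simp only [Finset.mem_Icc]; omega)
    have h2 := hw i (by simp only [Finset.mem_Icc]; omega)
    omega

lemma my_ent_append {u : List ℕ} (a : ℕ) {j : ℕ} (hj1 : 1 ≤ j) (hj : j ≤ u.length) :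
    ent (u ++ [a]) j = ent u j := by
  unfold ent
  exact List.getD_append _ _ _ _ (by omega)

lemma my_Mstep_len (w : List ℕ) (j : ℕ) : (Mstep w j).length = w.length := by
  simp [Mstep]

lemma my_Mstep_append (u : List ℕ) (a : ℕ) {j : ℕ} (hj1 : 1 ≤ j) (hj : j ≤ u.length) :
    Mstep (u ++ [a]) j = Mstep u j ++ [a] := by
  unfold Mstep
  rw [List.mapIdx_append_one]
  have he : ent (u ++ [a]) j = ent u j := my_ent_append a hj1 hj
  rw [he]
  congr 1
  simp only [if_neg (by omega : ¬(u.length + 1 < j ∧ ent u j ≤ a))]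

lemma my_foldl_Mstep_append (a : ℕ) :
    ∀ (js : List ℕ) (u : List ℕ), (∀ j ∈ js, 1 ≤ j ∧ j ≤ u.length) →
      js.foldl Mstep (u ++ [a]) = js.foldl Mstep u ++ [a]
  | [], u, _ => rfl
  | j :: t, u, h => by
      simp only [List.foldl_cons]
      rw [my_Mstep_append u a (h j (by simp)).1 (h j (by simp)).2]
      exact my_foldl_Mstep_append a t (Mstep u j) fun x hx => by
        have := h x (by simp [hx])
        rwa [my_Mstep_len]

lemma my_foldl_Mstep_len : ∀ (js : List ℕ) (u : List ℕ),
    (js.foldl Mstep u).length = u.length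
  | [], _ => rfl
  | j :: t, u => by
      simp only [List.foldl_cons]
      rw [my_foldl_Mstep_len t (Mstep u j), my_Mstep_len]

lemma my_Mstep_last (u : List ℕ) (a : ℕ) :
    Mstep (u ++ [a]) (u.length + 1) = plus u a ++ [a] := by
  have he : ent (u ++ [a]) (u.length + 1) = a := by
    unfold ent
    simp
  unfold Mstep plus
  rw [List.mapIdx_append_one, he]
  congr 1
  · apply List.ext_getElem (by simp)
    intro i h1 h2
    simp only [List.getElem_mapIdx, List.getElem_map]
    have : i + 1 < u.length + 1 := by simpa using h1
    simp [this]
  · simp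


/-- for an inversion sequence `α = β a` of length `n ≥ 1`,
`hat_max(α) = hat_max(β)⁺ a`, where `β` is the prefix of length `n - 1`,
`a = a_n`, and `hat_max(β)⁺ a` adds one to every entry of `hat_max(β)` that is
`≥ a` and appends `a` at the end. -/
theorem stmt12 (w : List ℕ) (hw : IsInvSeq w) (hn : 1 ≤ w.length) :
    hatmax w = plusApp (hatmax (w.take (w.length - 1))) (ent w w.length) := by
  have hne : w ≠ [] := by
    intro h; rw [h] at hn; simp at hn
  set n := w.length with hnw
  set u := w.take (n - 1) with hu
  set a := w.getLast hne with ha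
  have hwu : w = u ++ [a] := by
    rw [hu, ← List.dropLast_eq_take, ha, List.dropLast_concat_getLast]
  have hul : u.length = n - 1 := by
    rw [hu, List.length_take]; omega
  have henta : ent w n = a := by
    conv_lhs => rw [hwu]
    unfold ent
    rw [List.getD_append_right _ _ _ _ (by omega)]
    simp [hul]
  -- inversion sequence on u
  have hwu' : IsInvSeq u := by
    intro i hi
    simp only [Finset.mem_Icc] at hi
    have h1 := hw i (by simp only [Finset.mem_Icc]; omega)
    rwa [hwu, my_ent_append a hi.1 (by omega)] at h1
  -- compute hatmax w
  have h1 : hatmax w = (List.range' 1 n).foldl Mstep w := by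
    unfold hatmax hatd
    rw [my_ascSet_eq w hw (w.length - 1) (by omega), ← hnw, my_sort_Icc]
  have h2 : hatmax u = (List.range' 1 (n - 1)).foldl Mstep u := by
    unfold hatmax hatd
    rw [my_ascSet_eq u hwu' (u.length - 1) (by omega), hul, my_sort_Icc]
  have hrange : List.range' 1 n = List.range' 1 (n - 1) ++ [n] := by
    have h := List.range'_concat (step := 1) (s := 1) (n := n - 1)
    rw [Nat.sub_add_cancel hn] at h
    rw [h]
    have h2 : 1 + 1 * (n - 1) = n := by omega
    rw [h2]
  rw [h1, hrange, List.foldl_append]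
  conv_lhs => rw [hwu]
  rw [my_foldl_Mstep_append a _ u (fun j hj => by
    rw [List.mem_range'_1] at hj; omega)]
  simp only [List.foldl_cons, List.foldl_nil]
  rw [henta, h2]
  set L := List.foldl Mstep u (List.range' 1 (n - 1)) with hL
  have hn' : n = L.length + 1 := by
    rw [hL, my_foldl_Mstep_len, hul]; omega
  rw [hn', my_Mstep_last]
  rfl
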